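/- Let μ be a non-atomic finite measure on a measurable space (T, Σ) and θ a Young function satisfying the Δ₂-condition. Define the modular B(f) = ∫_T θ(|f(t)|) dμ(t) and the Luxemburg norm ‖f‖_θ for measurable f : T → ℝ. Then the Luxemburg norm is uniformly convex — i.e. for every ε > 0 there exists δ ∈ (0,1) such that all measurable f, g with ‖f‖_θ = ‖g‖_θ = 1 and ‖f − g‖_θ ≥ ε satisfy ‖(f+g)/2‖_θ ≤ 1 − δ — if and only if the modular B is uniformly convex — i.e. for every ε > 0 there exists δ ∈ (0,1) such that all measurable f, g with B(f) = B(g) = 1 and B(f − g) ≥ ε satisfy B((f+g)/2) ≤ 1 − δ. -/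

import Mathlib

/-!
Write `k ≥ 1` for a Δ₂-constant. Convexity of `θ` (its derivative `χ` is non-decreasing) gives
`θ (c u) ≤ c θ u` for `c ≤ 1`, and convexity between `u` and `2u` together with Δ₂ gives
`θ ((1 + t) u) ≤ (1 + t (k - 1)) θ u` for `t ≤ 1`. Fed into the definition of `‖·‖_θ`, these
show that `‖f‖_θ = 1 ↔ B(f) = 1`, that `‖f‖_θ < c ≤ 1` forces `B(f) ≤ c`, that
`B(f) ≤ k⁻ⁿ` forces `‖f‖_θ ≤ 2⁻ⁿ`, and that `B(f) ≤ 1 - δ'` forces `‖f‖_θ ≤ 1 / (1 + δ' / k)`.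
So unit spheres coincide, and separation and midpoint estimates transfer in both directions.
-/

open MeasureTheory Filter Set

/-- A Young function: `θ u = ∫₀ᵘ χ(t) dt` for some non-decreasing, left-continuous
`χ : [0,∞) → [0,∞)` with `χ 0 = 0` which is not identically zero. -/
def IsYoungFunction (θ : ℝ → ℝ) : Prop :=
  ∃ χ : ℝ → ℝ,
    (∀ t, 0 ≤ t → 0 ≤ χ t) ∧
    (∀ s t, 0 ≤ s → s ≤ t → χ s ≤ χ t) ∧
    (∀ t, 0 < t → Tendsto χ (nhdsWithin t (Set.Iio t)) (nhds (χ t))) ∧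
    χ 0 = 0 ∧
    (∃ t, 0 ≤ t ∧ χ t ≠ 0) ∧
    (∀ u, 0 ≤ u → θ u = ∫ t in (0:ℝ)..u, χ t)

/-- The Δ₂-condition: there is `k > 0` with `θ(2t) ≤ k·θ(t)` for all `t ≥ 0`. -/
def Delta2 (θ : ℝ → ℝ) : Prop :=
  ∃ k : ℝ, 0 < k ∧ ∀ t, 0 ≤ t → θ (2 * t) ≤ k * θ t

/-- The Luxemburg norm of `f` with respect to the Young function `θ` and the measure
`μ` : `inf {k > 0 : ∫ θ(‖f‖/k) dμ ≤ 1}`. -/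
noncomputable def luxNorm {T X : Type*} [MeasurableSpace T] [NormedAddCommGroup X]
    (θ : ℝ → ℝ) (μ : Measure T) (f : T → X) : ENNReal :=
  sInf {k : ENNReal | 0 < k ∧ k ≠ ⊤ ∧
    ∫⁻ t, ENNReal.ofReal (θ (‖f t‖ / k.toReal)) ∂μ ≤ 1}

open scoped ENNReal Topology

namespace IsYoungFunction

variable {θ : ℝ → ℝ}

lemma map_zero (hθ : IsYoungFunction θ) : θ 0 = 0 := by
  obtain ⟨χ, -, -, -, -, -, hθχ⟩ := hθ
  rw [hθχ 0 le_rfl, intervalIntegral.integral_same]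

lemma exists_sub_eq_integral (hθ : IsYoungFunction θ) :
    ∃ χ : ℝ → ℝ, (∀ t, 0 ≤ t → 0 ≤ χ t) ∧ MonotoneOn χ (Ici 0) ∧
      (∀ a b, 0 ≤ a → a ≤ b → IntervalIntegrable χ volume a b) ∧
      ∀ a b, 0 ≤ a → a ≤ b → θ b - θ a = ∫ t in a..b, χ t := by
  obtain ⟨χ, hnn, hmono, -, -, -, hθχ⟩ := hθ
  have hχ : MonotoneOn χ (Ici 0) := fun s hs t _ hst => hmono s t hs hst
  have hint : ∀ a b, 0 ≤ a → a ≤ b → IntervalIntegrable χ volume a b := fun a b ha hab =>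
    (hχ.mono (by rw [uIcc_of_le hab]; exact Icc_subset_Ici_iff hab |>.2 ha)).intervalIntegrable
  refine ⟨χ, hnn, hχ, hint, fun a b ha hab => ?_⟩
  rw [hθχ a ha, hθχ b (ha.trans hab)]
  exact intervalIntegral.integral_interval_sub_left (hint 0 b le_rfl (ha.trans hab))
    (hint 0 a le_rfl ha)

lemma monotoneOn (hθ : IsYoungFunction θ) : MonotoneOn θ (Ici 0) := by
  obtain ⟨χ, hnn, -, -, hθχ⟩ := hθ.exists_sub_eq_integral
  intro a ha b _ hab
  have := hθχ a b ha hab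
  have : 0 ≤ ∫ t in a..b, χ t :=
    intervalIntegral.integral_nonneg hab fun t ht => hnn t (le_trans ha ht.1)
  linarith

lemma nonneg (hθ : IsYoungFunction θ) {u : ℝ} (hu : 0 ≤ u) : 0 ≤ θ u :=
  hθ.map_zero ▸ hθ.monotoneOn (mem_Ici.2 le_rfl) (mem_Ici.2 hu) hu

-- `χ y` separates the slopes of `θ` to the left and to the right of `y`.
lemma convexOn (hθ : IsYoungFunction θ) : ConvexOn ℝ (Ici 0) θ := by
  obtain ⟨χ, -, hχ, hint, hθχ⟩ := hθ.exists_sub_eq_integral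
  refine convexOn_of_slope_mono_adjacent (convex_Ici 0) fun {x y z} hx _ hxy hyz => ?_
  have hy : (0 : ℝ) ≤ y := le_trans hx hxy.le
  have hleft : θ y - θ x ≤ (y - x) * χ y := by
    rw [hθχ x y hx hxy.le]
    simpa using intervalIntegral.integral_mono_on hxy.le (hint x y hx hxy.le)
      intervalIntegrable_const fun s hs => hχ (le_trans hx hs.1) hy hs.2
  have hright : (z - y) * χ y ≤ θ z - θ y := by
    rw [hθχ y z hy hyz.le]
    simpa using intervalIntegral.integral_mono_on hyz.le intervalIntegrable_const
      (hint y z hy hyz.le) fun s hs => hχ hy (le_trans hy hs.1) hs.1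
  calc (θ y - θ x) / (y - x) ≤ χ y := (div_le_iff₀ (sub_pos.2 hxy)).2 (by linarith)
    _ ≤ (θ z - θ y) / (z - y) := (le_div_iff₀ (sub_pos.2 hyz)).2 (by linarith)

lemma map_mul_le (hθ : IsYoungFunction θ) {c u : ℝ} (hc0 : 0 ≤ c) (hc1 : c ≤ 1)
    (hu : 0 ≤ u) : θ (c * u) ≤ c * θ u := by
  simpa [hθ.map_zero] using
    hθ.convexOn.2 (mem_Ici.2 le_rfl) (mem_Ici.2 hu) (sub_nonneg.2 hc1) hc0 (by ring)

lemma map_one_add_mul_le (hθ : IsYoungFunction θ) {k : ℝ}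
    (hk : ∀ u, 0 ≤ u → θ (2 * u) ≤ k * θ u) {t u : ℝ} (ht0 : 0 ≤ t) (ht1 : t ≤ 1)
    (hu : 0 ≤ u) : θ ((1 + t) * u) ≤ (1 + t * (k - 1)) * θ u := by
  have hconv := hθ.convexOn.2 (mem_Ici.2 hu) (mem_Ici.2 (by linarith : 0 ≤ 2 * u))
    (sub_nonneg.2 ht1) ht0 (by ring)
  simp only [smul_eq_mul] at hconv
  calc θ ((1 + t) * u) = θ ((1 - t) * u + t * (2 * u)) := by ring_nf
    _ ≤ (1 - t) * θ u + t * θ (2 * u) := hconv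
    _ ≤ (1 - t) * θ u + t * (k * θ u) := by gcongr; exact hk u hu
    _ = (1 + t * (k - 1)) * θ u := by ring

lemma map_two_pow_mul_le {k : ℝ} (hk0 : 0 ≤ k) (hk : ∀ u, 0 ≤ u → θ (2 * u) ≤ k * θ u)
    (n : ℕ) {u : ℝ} (hu : 0 ≤ u) : θ (2 ^ n * u) ≤ k ^ n * θ u := by
  induction n with
  | zero => simp
  | succ n ih =>
    calc θ (2 ^ (n + 1) * u) = θ (2 * (2 ^ n * u)) := by ring_nf
      _ ≤ k * θ (2 ^ n * u) := hk _ (by positivity)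
      _ ≤ k * (k ^ n * θ u) := by gcongr
      _ = k ^ (n + 1) * θ u := by ring

end IsYoungFunction

lemma Delta2.exists_one_le {θ : ℝ → ℝ} (hθ : IsYoungFunction θ) (hΔ : Delta2 θ) :
    ∃ k : ℝ, 1 ≤ k ∧ ∀ u, 0 ≤ u → θ (2 * u) ≤ k * θ u := by
  obtain ⟨k, -, hk⟩ := hΔ
  exact ⟨max k 1, le_max_right _ _, fun u hu =>
    (hk u hu).trans (by gcongr; exacts [hθ.nonneg hu, le_max_left _ _])⟩

section Luxemburg

variable {T : Type*} [MeasurableSpace T] {μ : Measure T} {θ : ℝ → ℝ}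

noncomputable def modular (θ : ℝ → ℝ) (μ : Measure T) (f : T → ℝ) : ℝ≥0∞ :=
  ∫⁻ t, ENNReal.ofReal (θ |f t|) ∂μ

lemma lintegral_ofReal_comp_mul_le {a b : ℝ} (hb : 0 ≤ b)
    (hscale : ∀ u, 0 ≤ u → θ (a * u) ≤ b * θ u) {g : T → ℝ} (hg : ∀ x, 0 ≤ g x) :
    ∫⁻ x, ENNReal.ofReal (θ (a * g x)) ∂μ ≤
      ENNReal.ofReal b * ∫⁻ x, ENNReal.ofReal (θ (g x)) ∂μ := by
  rw [← lintegral_const_mul' _ _ ENNReal.ofReal_ne_top]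
  refine lintegral_mono fun x => ?_
  rw [← ENNReal.ofReal_mul hb]
  exact ENNReal.ofReal_le_ofReal (hscale _ (hg x))

lemma luxNorm_le_ofReal (f : T → ℝ) {c : ℝ} (hc : 0 < c)
    (h : ∫⁻ t, ENNReal.ofReal (θ (|f t| / c)) ∂μ ≤ 1) :
    luxNorm θ μ f ≤ ENNReal.ofReal c := by
  refine sInf_le ⟨ENNReal.ofReal_pos.2 hc, ENNReal.ofReal_ne_top, ?_⟩
  simpa only [ENNReal.toReal_ofReal hc.le, Real.norm_eq_abs] using h

lemma lintegral_div_le_one_of_luxNorm_lt (hθ : IsYoungFunction θ) {f : T → ℝ} {c : ℝ}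
    (hc : 0 < c) (h : luxNorm θ μ f < ENNReal.ofReal c) :
    ∫⁻ t, ENNReal.ofReal (θ (|f t| / c)) ∂μ ≤ 1 := by
  obtain ⟨k, ⟨hk0, hktop, hk⟩, hkc⟩ := sInf_lt_iff.1 h
  have hk0' : 0 < k.toReal := ENNReal.toReal_pos hk0.ne' hktop
  refine le_trans (lintegral_mono fun t => ENNReal.ofReal_le_ofReal ?_) hk
  rw [Real.norm_eq_abs]
  exact hθ.monotoneOn (mem_Ici.2 (by positivity)) (mem_Ici.2 (by positivity))
    (div_le_div_of_nonneg_left (abs_nonneg _) hk0' (ENNReal.toReal_le_of_le_ofReal hc.le hkc.le))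

lemma luxNorm_le_inv_of_modular_le {a b : ℝ} (ha : 0 < a) (hb : 0 ≤ b)
    (hscale : ∀ u, 0 ≤ u → θ (a * u) ≤ b * θ u) {f : T → ℝ}
    (h : ENNReal.ofReal b * modular θ μ f ≤ 1) :
    luxNorm θ μ f ≤ ENNReal.ofReal a⁻¹ := by
  refine luxNorm_le_ofReal f (inv_pos.2 ha) ?_
  simp_rw [div_inv_eq_mul, mul_comm _ a]
  exact (lintegral_ofReal_comp_mul_le hb hscale fun x => abs_nonneg (f x)).trans h

lemma modular_le_of_luxNorm_lt (hθ : IsYoungFunction θ) {a b : ℝ} (ha : 0 < a)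
    (hb : 0 ≤ b) (hscale : ∀ u, 0 ≤ u → θ (a * u) ≤ b * θ u) {f : T → ℝ}
    (h : luxNorm θ μ f < ENNReal.ofReal a) :
    modular θ μ f ≤ ENNReal.ofReal b := by
  have hdiv := lintegral_div_le_one_of_luxNorm_lt hθ ha h
  calc modular θ μ f = ∫⁻ x, ENNReal.ofReal (θ (a * (|f x| / a))) ∂μ := by
        simp_rw [mul_div_cancel₀ _ ha.ne']; rfl
    _ ≤ ENNReal.ofReal b * ∫⁻ x, ENNReal.ofReal (θ (|f x| / a)) ∂μ :=
        lintegral_ofReal_comp_mul_le hb hscale fun x => by positivity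
    _ ≤ ENNReal.ofReal b := mul_le_of_le_one_right' hdiv

lemma modular_le_of_luxNorm_lt_of_le_one (hθ : IsYoungFunction θ) {c : ℝ} (hc0 : 0 < c)
    (hc1 : c ≤ 1) {f : T → ℝ} (h : luxNorm θ μ f < ENNReal.ofReal c) :
    modular θ μ f ≤ ENNReal.ofReal c :=
  modular_le_of_luxNorm_lt hθ hc0 hc0.le (fun _ hu => hθ.map_mul_le hc0.le hc1 hu) h

lemma luxNorm_le_one_of_modular_le_one {f : T → ℝ} (h : modular θ μ f ≤ 1) :
    luxNorm θ μ f ≤ 1 := by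
  simpa using luxNorm_le_inv_of_modular_le (θ := θ) one_pos zero_le_one
    (fun u _ => by simp) (by simpa using h)

lemma modular_lt_one_of_luxNorm_lt_one (hθ : IsYoungFunction θ) {f : T → ℝ}
    (h : luxNorm θ μ f < 1) : modular θ μ f < 1 := by
  obtain ⟨r, -, hfr, hr1⟩ := ENNReal.lt_iff_exists_real_btwn.1 h
  have hr0' : 0 < r := ENNReal.ofReal_pos.1 (pos_of_gt hfr)
  exact (modular_le_of_luxNorm_lt_of_le_one hθ hr0' (ENNReal.ofReal_lt_one.1 hr1).le
    hfr).trans_lt hr1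

lemma luxNorm_eq_one_of_modular_eq_one (hθ : IsYoungFunction θ) {f : T → ℝ}
    (h : modular θ μ f = 1) : luxNorm θ μ f = 1 :=
  le_antisymm (luxNorm_le_one_of_modular_le_one h.le)
    (not_lt.1 fun hlt => (modular_lt_one_of_luxNorm_lt_one hθ hlt).ne h)

lemma luxNorm_le_inv_one_add_of_modular_le (hθ : IsYoungFunction θ) {k : ℝ} (hk1 : 1 ≤ k)
    (hk : ∀ u, 0 ≤ u → θ (2 * u) ≤ k * θ u) {t c : ℝ}
    (ht0 : 0 ≤ t) (ht1 : t ≤ 1) (hc : (1 + t * (k - 1)) * c ≤ 1)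
    {f : T → ℝ} (h : modular θ μ f ≤ ENNReal.ofReal c) :
    luxNorm θ μ f ≤ ENNReal.ofReal (1 + t)⁻¹ := by
  have hb : 0 ≤ 1 + t * (k - 1) := by nlinarith
  refine luxNorm_le_inv_of_modular_le (by linarith) hb
    (fun u hu => hθ.map_one_add_mul_le hk ht0 ht1 hu) ?_
  calc ENNReal.ofReal (1 + t * (k - 1)) * modular θ μ f
      ≤ ENNReal.ofReal (1 + t * (k - 1)) * ENNReal.ofReal c := by gcongr
    _ ≤ 1 := by rw [← ENNReal.ofReal_mul hb]; exact ENNReal.ofReal_le_one.2 hc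

lemma luxNorm_le_inv_two_pow_of_modular_le {k : ℝ} (hk1 : 1 ≤ k)
    (hk : ∀ u, 0 ≤ u → θ (2 * u) ≤ k * θ u) (n : ℕ) {f : T → ℝ}
    (h : modular θ μ f ≤ ENNReal.ofReal (k ^ n)⁻¹) :
    luxNorm θ μ f ≤ ENNReal.ofReal (2 ^ n)⁻¹ := by
  have hkn : 0 < k ^ n := by positivity
  refine luxNorm_le_inv_of_modular_le (by positivity) hkn.le
    (fun u hu => IsYoungFunction.map_two_pow_mul_le (by linarith) hk n hu) ?_
  calc ENNReal.ofReal (k ^ n) * modular θ μ f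
      ≤ ENNReal.ofReal (k ^ n) * ENNReal.ofReal (k ^ n)⁻¹ := by gcongr
    _ = 1 := by rw [← ENNReal.ofReal_mul hkn.le, mul_inv_cancel₀ hkn.ne', ENNReal.ofReal_one]

lemma modular_le_one_of_luxNorm_le_one (hθ : IsYoungFunction θ) {k : ℝ} (hk1 : 1 ≤ k)
    (hk : ∀ u, 0 ≤ u → θ (2 * u) ≤ k * θ u) {f : T → ℝ}
    (h : luxNorm θ μ f ≤ 1) : modular θ μ f ≤ 1 := by
  have hbound : ∀ s ∈ Ioc (0 : ℝ) 1, modular θ μ f ≤ ENNReal.ofReal (1 + s * (k - 1)) := by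
    rintro s ⟨hs0, hs1⟩
    have hlt : luxNorm θ μ f < ENNReal.ofReal (1 + s) :=
      h.trans_lt (ENNReal.one_lt_ofReal.2 (by linarith))
    exact modular_le_of_luxNorm_lt hθ (by linarith) (by nlinarith)
      (fun u hu => hθ.map_one_add_mul_le hk hs0.le hs1 hu) hlt
  have hlim : Tendsto (fun s : ℝ => ENNReal.ofReal (1 + s * (k - 1))) (𝓝[>] 0) (𝓝 1) := by
    rw [← ENNReal.ofReal_one]
    refine ENNReal.tendsto_ofReal (tendsto_nhdsWithin_of_tendsto_nhds ?_)
    simpa using ((continuous_id.mul continuous_const).const_add 1).tendsto (0 : ℝ)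
  exact ge_of_tendsto hlim (eventually_of_mem (Ioc_mem_nhdsGT one_pos) hbound)

lemma luxNorm_lt_one_of_modular_lt_one (hθ : IsYoungFunction θ) {k : ℝ} (hk1 : 1 ≤ k)
    (hk : ∀ u, 0 ≤ u → θ (2 * u) ≤ k * θ u) {f : T → ℝ}
    (h : modular θ μ f < 1) : luxNorm θ μ f < 1 := by
  set a := (modular θ μ f).toReal
  have ha0 : 0 ≤ a := ENNReal.toReal_nonneg
  have ha1 : a < 1 := ENNReal.toReal_lt_of_lt_ofReal (by rwa [ENNReal.ofReal_one])
  have hk0 : 0 < k := by linarith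
  -- dilating by `1 + t` multiplies `B` by at most `1 + t (k - 1)`, which `t = (1 - a) / k`
  -- keeps within the slack `1 - a`
  set t := (1 - a) / k
  have ht0 : 0 < t := div_pos (by linarith) hk0
  have htk : t * k = 1 - a := div_mul_cancel₀ _ hk0.ne'
  have hlux := luxNorm_le_inv_one_add_of_modular_le hθ hk1 hk ht0.le
    ((div_le_one hk0).2 (by linarith)) (by nlinarith)
    (ENNReal.ofReal_toReal h.ne_top).ge
  exact hlux.trans_lt (ENNReal.ofReal_lt_one.2 (inv_lt_one_of_one_lt₀ (by linarith)))

lemma modular_eq_one_of_luxNorm_eq_one (hθ : IsYoungFunction θ) {k : ℝ} (hk1 : 1 ≤ k)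
    (hk : ∀ u, 0 ≤ u → θ (2 * u) ≤ k * θ u) {f : T → ℝ} (h : luxNorm θ μ f = 1) :
    modular θ μ f = 1 :=
  le_antisymm (modular_le_one_of_luxNorm_le_one hθ hk1 hk h.le)
    (not_lt.1 fun hlt => (luxNorm_lt_one_of_modular_lt_one hθ hk1 hk hlt).ne h)

end Luxemburg

section UniformConvexity

variable {T : Type*} [MeasurableSpace T]

def LuxNormUniformlyConvex (θ : ℝ → ℝ) (μ : Measure T) : Prop :=
  ∀ ε : ℝ, 0 < ε → ∃ δ : ℝ, 0 < δ ∧ δ < 1 ∧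
    ∀ f g : T → ℝ, Measurable f → Measurable g →
      luxNorm θ μ f = 1 → luxNorm θ μ g = 1 →
      ENNReal.ofReal ε ≤ luxNorm θ μ (fun t => f t - g t) →
      luxNorm θ μ (fun t => (f t + g t) / 2) ≤ ENNReal.ofReal (1 - δ)

def ModularUniformlyConvex (θ : ℝ → ℝ) (μ : Measure T) : Prop :=
  ∀ ε : ℝ, 0 < ε → ∃ δ : ℝ, 0 < δ ∧ δ < 1 ∧
    ∀ f g : T → ℝ, Measurable f → Measurable g →
      modular θ μ f = 1 → modular θ μ g = 1 →
      ENNReal.ofReal ε ≤ modular θ μ (fun t => f t - g t) →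
      modular θ μ (fun t => (f t + g t) / 2) ≤ ENNReal.ofReal (1 - δ)

variable {μ : Measure T} {θ : ℝ → ℝ}

lemma LuxNormUniformlyConvex.modularUniformlyConvex (hθ : IsYoungFunction θ)
    (H : LuxNormUniformlyConvex θ μ) : ModularUniformlyConvex θ μ := by
  intro ε hε
  set ε₀ := min ε 1 / 2 with hε₀_def
  have hε₀ : 0 < ε₀ := by positivity
  have hε₀1 : ε₀ ≤ 1 := by linarith [min_le_right ε 1, hε₀_def]
  have hε₀ε : ε₀ < ε := by linarith [min_le_left ε 1, hε₀_def]
  obtain ⟨δ, hδ0, hδ1, hH⟩ := H ε₀ hε₀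
  refine ⟨δ / 2, by positivity, by linarith, fun f g hf hg hBf hBg hBfg => ?_⟩
  have hfg : ENNReal.ofReal ε₀ ≤ luxNorm θ μ (fun t => f t - g t) := by
    by_contra! hlt
    have hB := hBfg.trans (modular_le_of_luxNorm_lt_of_le_one hθ hε₀ hε₀1 hlt)
    exact (ENNReal.ofReal_lt_ofReal_iff hε).2 hε₀ε |>.not_ge hB
  have hmid := hH f g hf hg (luxNorm_eq_one_of_modular_eq_one hθ hBf)
    (luxNorm_eq_one_of_modular_eq_one hθ hBg) hfg
  exact modular_le_of_luxNorm_lt_of_le_one hθ (by linarith) (by linarith)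
    (hmid.trans_lt ((ENNReal.ofReal_lt_ofReal_iff (by linarith)).2 (by linarith)))

lemma ModularUniformlyConvex.luxNormUniformlyConvex (hθ : IsYoungFunction θ) {k : ℝ}
    (hk1 : 1 ≤ k) (hk : ∀ u, 0 ≤ u → θ (2 * u) ≤ k * θ u)
    (H : ModularUniformlyConvex θ μ) : LuxNormUniformlyConvex θ μ := by
  intro ε hε
  obtain ⟨n, hn⟩ := exists_pow_lt_of_lt_one hε one_half_lt_one
  obtain ⟨δ', hδ'0, hδ'1, hH⟩ := H (k ^ n)⁻¹ (by positivity)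
  have hk0 : 0 < k := by linarith
  -- `t = δ' / k` makes `(1 + t (k - 1)) (1 - δ') ≤ 1`, so a midpoint with `B ≤ 1 - δ'` can be
  -- dilated by `1 + t` and still have modular `≤ 1`
  set t := δ' / k
  have ht0 : 0 < t := by positivity
  have htk : t * k = δ' := div_mul_cancel₀ _ hk0.ne'
  refine ⟨t / (1 + t), by positivity, (div_lt_one (by positivity)).2 (by linarith),
    fun f g hf hg hf1 hg1 hfg => ?_⟩
  have hBfg : ENNReal.ofReal (k ^ n)⁻¹ ≤ modular θ μ (fun x => f x - g x) := by
    by_contra! hlt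
    have hsmall := hfg.trans (luxNorm_le_inv_two_pow_of_modular_le hk1 hk n hlt.le)
    rw [← inv_pow, ← one_div] at hsmall
    exact (ENNReal.ofReal_lt_ofReal_iff hε).2 hn |>.not_ge hsmall
  have hmid := hH f g hf hg (modular_eq_one_of_luxNorm_eq_one hθ hk1 hk hf1)
    (modular_eq_one_of_luxNorm_eq_one hθ hk1 hk hg1) hBfg
  rw [show 1 - t / (1 + t) = (1 + t)⁻¹ by field_simp; ring]
  exact luxNorm_le_inv_one_add_of_modular_le hθ hk1 hk ht0.le
    ((div_le_one hk0).2 (by linarith)) (by nlinarith) hmid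

end UniformConvexity

theorem luxNorm_uniformlyConvex_iff_modular_general {T : Type*} [MeasurableSpace T]
    (μ : Measure T)
    (θ : ℝ → ℝ) (hθ : IsYoungFunction θ) (hΔ : Delta2 θ) :
    ((∀ ε : ℝ, 0 < ε → ∃ δ : ℝ, 0 < δ ∧ δ < 1 ∧
        ∀ f g : T → ℝ, Measurable f → Measurable g →
          luxNorm θ μ f = 1 → luxNorm θ μ g = 1 →
          ENNReal.ofReal ε ≤ luxNorm θ μ (fun t => f t - g t) →
          luxNorm θ μ (fun t => (f t + g t) / 2) ≤ ENNReal.ofReal (1 - δ)) ↔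
      (∀ ε : ℝ, 0 < ε → ∃ δ : ℝ, 0 < δ ∧ δ < 1 ∧
        ∀ f g : T → ℝ, Measurable f → Measurable g →
          (∫⁻ t, ENNReal.ofReal (θ |f t|) ∂μ) = 1 →
          (∫⁻ t, ENNReal.ofReal (θ |g t|) ∂μ) = 1 →
          ENNReal.ofReal ε ≤ (∫⁻ t, ENNReal.ofReal (θ |f t - g t|) ∂μ) →
          (∫⁻ t, ENNReal.ofReal (θ (|(f t + g t) / 2|)) ∂μ) ≤ ENNReal.ofReal (1 - δ))) := by
  obtain ⟨k, hk1, hk⟩ := hΔ.exists_one_le hθ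
  exact ⟨LuxNormUniformlyConvex.modularUniformlyConvex hθ,
    ModularUniformlyConvex.luxNormUniformlyConvex hθ hk1 hk⟩

/-- For a non-atomic finite measure and a Young function satisfying Δ₂, the Luxemburg norm
is uniformly convex iff the modular `B(f) = ∫ θ(|f|) dμ` is uniformly convex. -/
theorem luxNorm_uniformlyConvex_iff_modular {T : Type*} [MeasurableSpace T]
    (μ : Measure T) [IsFiniteMeasure μ]
    (hatomless : ∀ E : Set T, MeasurableSet E → 0 < μ E →
      ∃ F, F ⊆ E ∧ MeasurableSet F ∧ 0 < μ F ∧ μ F < μ E)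
    (θ : ℝ → ℝ) (hθ : IsYoungFunction θ) (hΔ : Delta2 θ) :
    ((∀ ε : ℝ, 0 < ε → ∃ δ : ℝ, 0 < δ ∧ δ < 1 ∧
        ∀ f g : T → ℝ, Measurable f → Measurable g →
          luxNorm θ μ f = 1 → luxNorm θ μ g = 1 →
          ENNReal.ofReal ε ≤ luxNorm θ μ (fun t => f t - g t) →
          luxNorm θ μ (fun t => (f t + g t) / 2) ≤ ENNReal.ofReal (1 - δ)) ↔
      (∀ ε : ℝ, 0 < ε → ∃ δ : ℝ, 0 < δ ∧ δ < 1 ∧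
        ∀ f g : T → ℝ, Measurable f → Measurable g →
          (∫⁻ t, ENNReal.ofReal (θ |f t|) ∂μ) = 1 →
          (∫⁻ t, ENNReal.ofReal (θ |g t|) ∂μ) = 1 →
          ENNReal.ofReal ε ≤ (∫⁻ t, ENNReal.ofReal (θ |f t - g t|) ∂μ) →
          (∫⁻ t, ENNReal.ofReal (θ (|(f t + g t) / 2|)) ∂μ) ≤ ENNReal.ofReal (1 - δ))) :=
  luxNorm_uniformlyConvex_iff_modular_general μ θ hθ hΔ
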